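/- Let a be a positive integer and let X be the nonsingular projective toric 4-fold corresponding to the fan Σ with primitive generators G(Σ) = {x_1,…,x_7} and primitive relations x_1 + x_7 = 0, x_2 + x_3 + x_4 = a·x_1, x_4 + x_5 + x_6 = (a+1)·x_1, x_5 + x_6 + x_7 = x_2 + x_3, and x_1 + x_2 + x_3 = x_5 + x_6. Then X admits no totally nondegenerate finite morphism from an abelian surface. (For a = 1, X is the nonsingular toric Fano 4-fold of type G_1.) -/

import Mathlib

open Finset

/-- An abelian surface over `ℂ`, recorded abstractly through its group `Div` of
divisor classes modulo algebraic equivalence, the intersection pairing, and the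
effectivity and ampleness predicates.  The listed axioms are standard facts
about divisors on an abelian surface. -/
structure AbelianSurface (Div : Type) [AddCommGroup Div] : Type where
  /-- the intersection pairing `D.E` on the abelian surface -/
  inter : Div →+ Div →+ ℤ
  inter_comm : ∀ D E : Div, inter D E = inter E D
  /-- `Effective D` ↔ `D` is the class of a (nonzero or zero) effective divisor -/
  Effective : Div → Prop
  effective_zero : Effective 0
  effective_add : ∀ {D E : Div}, Effective D → Effective E → Effective (D + E)
  /-- on an abelian surface two effective divisors intersect nonnegatively -/
  inter_nonneg_of_effective : ∀ {D E : Div}, Effective D → Effective E → 0 ≤ inter D E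
  /-- `Ample D` ↔ `D` is the class of an ample divisor -/
  Ample : Div → Prop
  /-- on an abelian surface an effective divisor with positive self-intersection is ample -/
  ample_of_effective_of_sq_pos : ∀ {D : Div}, Effective D → 0 < inter D D → Ample D
  /-- an ample divisor meets every nonzero effective divisor positively -/
  inter_pos_of_ample : ∀ {D E : Div}, Ample D → Effective E → E ≠ 0 → 0 < inter D E
  /-- an ample divisor has positive self-intersection -/
  sq_pos_of_ample : ∀ {D : Div}, Ample D → 0 < inter D D

/-- A complete nonsingular toric 4-fold `X`, presented by the primitive
generators `x_1, …, x_n ∈ N = ℤ⁴` of its fan `Σ` together with the predicate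
`IsCone` recording which subsets of the rays span a cone of `Σ`. -/
structure ToricFourfold (n : ℕ) : Type where
  /-- the set `G(Σ)` of primitive generators `x_1, …, x_n` of `Σ` in `N = ℤ⁴` -/
  gen : Fin n → Fin 4 → ℤ
  gen_injective : Function.Injective gen
  /-- `IsCone S` ↔ the rays `{x_i : i ∈ S}` span a cone of `Σ` -/
  IsCone : Finset (Fin n) → Prop
  isCone_empty : IsCone ∅
  isCone_singleton : ∀ i : Fin n, IsCone {i}
  isCone_mono : ∀ {S T : Finset (Fin n)}, S ⊆ T → IsCone T → IsCone S
  /-- nonsingularity: the generators of each cone form part of a `ℤ`-basis of `N` -/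
  nonsingular : ∀ {S : Finset (Fin n)}, IsCone S →
    ∃ b : Module.Basis (Fin 4) ℤ (Fin 4 → ℤ), ∃ ι : {x // x ∈ S} → Fin 4,
      Function.Injective ι ∧ ∀ i : {x // x ∈ S}, gen i.1 = b (ι i)
  /-- completeness: the cones of `Σ` cover `N_ℚ = ℚ⁴` -/
  complete : ∀ v : Fin 4 → ℚ, ∃ S : Finset (Fin n), IsCone S ∧
    ∃ c : Fin n → ℚ, (∀ i, 0 ≤ c i) ∧ (∀ i, i ∉ S → c i = 0) ∧
      ∀ k, v k = ∑ i, c i * (gen i k : ℚ)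

/-- A primitive collection of the fan of `X` (in the sense of Batyrev):
a minimal subset of the set of rays not spanning a cone. -/
def ToricFourfold.IsPrimitiveCollection {n : ℕ} (X : ToricFourfold n)
    (P : Finset (Fin n)) : Prop :=
  ¬ X.IsCone P ∧ ∀ Q : Finset (Fin n), Q ⊂ P → X.IsCone Q

/-- An (equivariant) isomorphism of complete nonsingular toric 4-folds,
i.e. an isomorphism of the corresponding fans. -/
def ToricFourfold.Iso {m n : ℕ} (X : ToricFourfold m) (Y : ToricFourfold n) : Prop :=
  ∃ (e : Fin m ≃ Fin n) (g : Matrix (Fin 4) (Fin 4) ℤ), IsUnit g.det ∧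
    (∀ i, Y.gen (e i) = g.mulVec (X.gen i)) ∧
    ∀ S : Finset (Fin m), X.IsCone S ↔ Y.IsCone (S.image e)

/-- A projective nonsingular toric 4-fold: a complete nonsingular toric 4-fold
together with the predicate recording which `T_N`-invariant divisors
`∑ i, c i • D i` are ample, and (projectivity) an ample effective such divisor. -/
structure ProjToricFourfold (n : ℕ) : Type extends ToricFourfold n where
  /-- `IsAmple c` ↔ the `T_N`-invariant divisor `∑ i, c i • D i` is ample on `X` -/
  IsAmple : (Fin n → ℤ) → Prop
  /-- projectivity: there is an ample effective `T_N`-invariant divisor -/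
  exists_ample : ∃ c : Fin n → ℤ, (∀ i, 0 ≤ c i) ∧ IsAmple c

/-- `X` is Fano: the anticanonical divisor `∑ i, D i` is ample. -/
def ProjToricFourfold.IsFano {n : ℕ} (X : ProjToricFourfold n) : Prop :=
  X.IsAmple fun _ => 1

/-- A totally nondegenerate finite morphism `φ : A → X` from an abelian surface
`A` to a complete nonsingular toric 4-fold `X`, recorded through the pullbacks
`C i = φ*(D i)` of the `T_N`-invariant prime divisors `D 1, …, D n` of `X`:
total nondegeneracy says that each `D i` meets `φ(A)`, so that each `C i` is a
nonzero effective divisor on `A`. -/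
structure TNDMorphism {n : ℕ} (X : ToricFourfold n) {Div : Type} [AddCommGroup Div]
    (A : AbelianSurface Div) : Type where
  /-- the pullbacks `C i = φ*(D i)` -/
  C : Fin n → Div
  effective : ∀ i, A.Effective (C i)
  /-- total nondegeneracy: `D i ∩ φ(A) ≠ ∅`, so `C i` is a nonzero effective divisor -/
  ne_zero : ∀ i, C i ≠ 0
  /-- if `{x i, x j}` spans no cone of `Σ` then `D i ∩ D j = ∅`, hence the
  pullbacks have intersection number zero -/
  inter_eq_zero : ∀ {i j : Fin n}, i ≠ j → ¬ X.IsCone {i, j} → A.inter (C i) (C j) = 0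
  /-- for every `m ∈ M` the pullback of the principal divisor
  `div 𝐞(m) = ∑ i ⟨m, x i⟩ D i` is (algebraically equivalent to) zero -/
  principal_rel : ∀ m : Fin 4 → ℤ, ∑ i, (∑ k, m k * X.gen i k) • C i = 0

/-- A totally nondegenerate finite morphism to a projective nonsingular toric
4-fold; finiteness of `φ` moreover makes pullbacks of ample divisors ample. -/
structure TNDMorphismProj {n : ℕ} (X : ProjToricFourfold n) {Div : Type} [AddCommGroup Div]
    (A : AbelianSurface Div) extends TNDMorphism X.toToricFourfold A : Type where
  /-- the pullback of an ample divisor under the finite morphism `φ` is ample -/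
  pull_ample : ∀ c : Fin n → ℤ, X.IsAmple c → A.Ample (∑ i, c i • C i)

/-- `X` admits a totally nondegenerate finite morphism from an abelian surface. -/
def ProjToricFourfold.HasTND {n : ℕ} (X : ProjToricFourfold n) : Prop :=
  ∃ (Div : Type) (inst : AddCommGroup Div) (A : @AbelianSurface Div inst),
    Nonempty (@TNDMorphismProj n X Div inst A)

/-- A totally nondegenerate embedding `φ : A ↪ X` of an abelian surface into a
projective nonsingular toric 4-fold: a totally nondegenerate finite morphism
which is a closed embedding.  Besides the finite-morphism data we record the
intersection-theoretic data available for an embedded surface: the quadruple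
intersection numbers `quad i j k l = D i · D j · D k · D l` on `X`, the class
`[A] = ∑ k l, aClass k l • (D k · D l)` of `A` in the Chow group `A²(X)`, the
compatibility `(φ*D i)·(φ*D j) = D i · D j · [A]`, and Van de Ven's relation
`c₂(X)·[A] = [A]²` where `c₂(X) = ∑_{i<j} D i · D j` for a nonsingular complete
toric variety. -/
structure TNDEmbedding {n : ℕ} (X : ProjToricFourfold n) {Div : Type} [AddCommGroup Div]
    (A : AbelianSurface Div) : Type extends TNDMorphismProj X A where
  /-- the intersection numbers `D i · D j · D k · D l` on `X` -/
  quad : Fin n → Fin n → Fin n → Fin n → ℤ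
  /-- the coefficients of the class `[A] ∈ A²(X)` in terms of the classes `D k · D l` -/
  aClass : Fin n → Fin n → ℤ
  /-- for the embedded surface `A ⊂ X`, `(φ*D i)·(φ*D j) = D i · D j · [A]` -/
  inter_eq_quad : ∀ i j : Fin n,
    A.inter (C i) (C j) = ∑ k, ∑ l, aClass k l * quad i j k l
  /-- Van de Ven's relation `c₂(X)·[A] = [A]²` -/
  van_de_ven : ∑ i, ∑ j ∈ Finset.Ioi i, A.inter (C i) (C j) =
    ∑ k, ∑ l, ∑ k', ∑ l', aClass k l * aClass k' l' * quad k l k' l'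

/-- `X` admits a totally nondegenerate embedding of an abelian surface. -/
def ProjToricFourfold.HasTNDEmbedding {n : ℕ} (X : ProjToricFourfold n) : Prop :=
  ∃ (Div : Type) (inst : AddCommGroup Div) (A : @AbelianSurface Div inst),
    Nonempty (@TNDEmbedding n X Div inst A)

/-- `ψ : Y → X` is a 2-blow-up: an equivariant blow-up of `X` along a
`T_N`-invariant subvariety of codimension 2.  On fans this is the star
subdivision of the fan of `X` at a 2-dimensional cone `{x i, x j}`, the new ray
(indexed last) being generated by `x i + x j`. -/
def IsTwoBlowUp {m n : ℕ} (Y : ProjToricFourfold m) (X : ProjToricFourfold n) : Prop :=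
  ∃ h : m = n + 1, ∃ i j : Fin n, i ≠ j ∧ X.IsCone {i, j} ∧
    (∀ k : Fin n, Y.gen (finCongr h.symm k.castSucc) = X.gen k) ∧
    Y.gen (finCongr h.symm (Fin.last n)) = X.gen i + X.gen j ∧
    ∀ S : Finset (Fin n),
      (Y.IsCone (S.image fun k => finCongr h.symm k.castSucc) ↔
        X.IsCone S ∧ ¬ {i, j} ⊆ S) ∧
      (Y.IsCone (insert (finCongr h.symm (Fin.last n))
          (S.image fun k => finCongr h.symm k.castSucc)) ↔
        ¬ {i, j} ⊆ S ∧ X.IsCone (S ∪ {i, j}))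

/-- The fan of `X` splits (after a change of coordinates in `N = ℤ⁴`) as the
product of two 2-dimensional complete fans, i.e. `X ≅ X₁ × X₂` for nonsingular
complete toric surfaces `X₁`, `X₂`.  When `X` is moreover Fano, the two factors
are nonsingular toric del Pezzo surfaces. -/
def ProjToricFourfold.IsProductOfSurfaces {n : ℕ} (X : ProjToricFourfold n) : Prop :=
  ∃ g : Matrix (Fin 4) (Fin 4) ℤ, IsUnit g.det ∧
    ∃ σ : Fin n → Bool,
      (∀ i, σ i = true → g.mulVec (X.gen i) 2 = 0 ∧ g.mulVec (X.gen i) 3 = 0) ∧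
      (∀ i, σ i = false → g.mulVec (X.gen i) 0 = 0 ∧ g.mulVec (X.gen i) 1 = 0) ∧
      ∀ S : Finset (Fin n), X.IsCone S ↔
        (X.IsCone (S.filter fun i => σ i = true) ∧ X.IsCone (S.filter fun i => σ i = false))

/-!
The rays `x_2, x_3, x_5, x_6` contain no primitive collection, so they span a cone of `Σ` and
form a `ℤ`-basis of `N`. Intersecting the principal relations `∑ ⟨m, x_i⟩ C_i = 0` for the dual
basis `m` with `C_1 = φ*D_1`, and using `C_1 · C_7 = 0` (as `{x_1, x_7}` is primitive) together
with the nonnegativity of intersections of effective divisors, forces `C_1 · C_i = 0` for every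
`i`. This contradicts the positivity of `C_1` against the pullback of an ample divisor.
-/

namespace ToricFourfold

variable {n : ℕ} (X : ToricFourfold n)

theorem exists_isPrimitiveCollection_subset_of_not_isCone {S : Finset (Fin n)}
    (hS : ¬ X.IsCone S) : ∃ P ⊆ S, X.IsPrimitiveCollection P := by
  induction S using Finset.strongInduction with
  | _ S ih =>
    by_cases hmin : ∀ Q ⊂ S, X.IsCone Q
    · exact ⟨S, subset_rfl, hS, hmin⟩
    · push Not at hmin
      obtain ⟨Q, hQS, hQ⟩ := hmin
      obtain ⟨P, hPQ, hP⟩ := ih Q hQS hQ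
      exact ⟨P, hPQ.trans hQS.subset, hP⟩

theorem isCone_of_forall_isPrimitiveCollection_not_subset {S : Finset (Fin n)}
    (h : ∀ P, X.IsPrimitiveCollection P → ¬ P ⊆ S) : X.IsCone S := by
  by_contra hS
  obtain ⟨P, hPS, hP⟩ := X.exists_isPrimitiveCollection_subset_of_not_isCone hS
  exact h P hP hPS

theorem exists_dual_eq_ite_of_isCone {S : Finset (Fin n)} (hS : X.IsCone S) {s : Fin n}
    (hs : s ∈ S) :
    ∃ m : Module.Dual ℤ (Fin 4 → ℤ), ∀ t ∈ S, m (X.gen t) = if t = s then 1 else 0 := by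
  obtain ⟨b, ι, hι, hgen⟩ := X.nonsingular hS
  refine ⟨b.coord (ι ⟨s, hs⟩), fun t ht => ?_⟩
  rw [hgen ⟨t, ht⟩, Module.Basis.coord_apply, Module.Basis.repr_self_apply]
  simp [hι.eq_iff]

end ToricFourfold

namespace TNDMorphism

variable {n : ℕ} {X : ToricFourfold n} {Div : Type} [AddCommGroup Div] {A : AbelianSurface Div}
  (T : TNDMorphism X A)

theorem sum_dual_smul_eq_zero (m : Module.Dual ℤ (Fin 4 → ℤ)) :
    ∑ i, m (X.gen i) • T.C i = 0 := by
  simpa [LinearMap.pi_apply_eq_sum_univ m (X.gen _), mul_comm] using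
    T.principal_rel fun k => m fun j => if k = j then 1 else 0

theorem sum_dual_mul_inter_eq_zero (m : Module.Dual ℤ (Fin 4 → ℤ)) (j : Fin n) :
    ∑ i, m (X.gen i) * A.inter (T.C j) (T.C i) = 0 := by
  simpa using congrArg (A.inter (T.C j)) (T.sum_dual_smul_eq_zero m)

end TNDMorphism

theorem TNDMorphismProj.exists_inter_ne_zero {n : ℕ} {X : ProjToricFourfold n} {Div : Type}
    [AddCommGroup Div] {A : AbelianSurface Div} (T : TNDMorphismProj X A) (j : Fin n) :
    ∃ i, A.inter (T.C j) (T.C i) ≠ 0 := by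
  obtain ⟨c, -, hc⟩ := X.exists_ample
  have hpos := A.inter_pos_of_ample (T.pull_ample c hc) (T.effective j) (T.ne_zero j)
  rw [A.inter_comm, map_sum] at hpos
  by_contra! h
  simp [h] at hpos

section G1

variable {Div : Type} [AddCommGroup Div] {A : AbelianSurface Div} {X : ToricFourfold 7}
  (T : TNDMorphism X A)

/-- The principal relation of `m` intersected with `C j`, after eliminating `x_1, x_4, x_7`
by the primitive relations. -/
theorem TNDMorphism.G1_inter_relation (a : ℤ) (h1 : X.gen 0 + X.gen 6 = 0)
    (h2 : X.gen 1 + X.gen 2 + X.gen 3 = a • X.gen 0)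
    (h5 : X.gen 0 + X.gen 1 + X.gen 2 = X.gen 4 + X.gen 5)
    (m : Module.Dual ℤ (Fin 4 → ℤ)) (j : Fin 7) :
    let d k := m (X.gen k)
    let q i := A.inter (T.C j) (T.C i)
    (d 4 + d 5 - d 1 - d 2) * (q 0 + a * q 3 - q 6) + d 1 * (q 1 - q 3) + d 2 * (q 2 - q 3)
      + d 4 * q 4 + d 5 * q 5 = 0 := by
  intro d q
  have hx0 : X.gen 0 = X.gen 4 + X.gen 5 - X.gen 1 - X.gen 2 := by rw [← h5]; abel
  have hx3 : X.gen 3 = a • X.gen 0 - X.gen 1 - X.gen 2 := by rw [← h2]; abel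
  have hx6 : X.gen 6 = -X.gen 0 := eq_neg_of_add_eq_zero_right h1
  have h := T.sum_dual_mul_inter_eq_zero m j
  rw [Fin.sum_univ_seven, hx3, hx6, hx0] at h
  simp only [map_add, map_sub, map_neg, map_zsmul, smul_eq_mul] at h
  linear_combination h

theorem TNDMorphism.G1_inter_eq_zero {a : ℤ} (ha : 0 < a) (h1 : X.gen 0 + X.gen 6 = 0)
    (h2 : X.gen 1 + X.gen 2 + X.gen 3 = a • X.gen 0)
    (h5 : X.gen 0 + X.gen 1 + X.gen 2 = X.gen 4 + X.gen 5)
    (hcone : X.IsCone {1, 2, 4, 5}) (h06 : ¬ X.IsCone {0, 6}) (i : Fin 7) :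
    A.inter (T.C 0) (T.C i) = 0 := by
  set q : Fin 7 → ℤ := fun k => A.inter (T.C 0) (T.C k)
  have relation (s : Fin 7) (hs : s ∈ ({1, 2, 4, 5} : Finset (Fin 7))) :
      let e k : ℤ := if k = s then 1 else 0
      (e 4 + e 5 - e 1 - e 2) * (q 0 + a * q 3 - q 6) + e 1 * (q 1 - q 3) + e 2 * (q 2 - q 3)
        + e 4 * q 4 + e 5 * q 5 = 0 := by
    obtain ⟨m, hm⟩ := X.exists_dual_eq_ite_of_isCone hcone hs
    simpa [hm] using T.G1_inter_relation a h1 h2 h5 m 0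
  have E1 := relation 1 (by decide)
  have E2 := relation 2 (by decide)
  have E4 := relation 4 (by decide)
  have E5 := relation 5 (by decide)
  simp only [Fin.isValue, Fin.reduceEq, if_true, if_false] at E1 E2 E4 E5
  have hq_nonneg i : 0 ≤ q i := A.inter_nonneg_of_effective (T.effective 0) (T.effective i)
  have hq6 : q 6 = 0 := T.inter_eq_zero (by decide) h06
  have haq3 : 0 ≤ a * q 3 := mul_nonneg ha.le (hq_nonneg 3)
  have hq0 : q 0 = 0 := by linarith [hq_nonneg 0, hq_nonneg 4]
  have hq4 : q 4 = 0 := by linarith [hq_nonneg 0, hq_nonneg 4]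
  have hq3 : q 3 = 0 := by
    have : a * q 3 = 0 := by linarith
    simpa [ha.ne'] using this
  have hq5 : q 5 = 0 := by linear_combination E5 - hq0 - a * hq3 + hq6
  have hq1 : q 1 = 0 := by linear_combination E1 - hq6 + hq0 + (a + 1) * hq3
  have hq2 : q 2 = 0 := by linear_combination E2 - hq6 + hq0 + (a + 1) * hq3
  fin_cases i <;> assumption

end G1

/-- Rays are indexed from `0`, so `x_k` is `X.gen (k-1)`. -/
theorem no_tnd_morphism_G1_family_general (a : ℤ) (ha : 0 < a) (X : ProjToricFourfold 7)
    (hPC : ∀ P : Finset (Fin 7), X.toToricFourfold.IsPrimitiveCollection P ↔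
      (P = {0, 6} ∨ P = {1, 2, 3} ∨ P = {3, 4, 5} ∨ P = {4, 5, 6} ∨ P = {0, 1, 2}))
    (h1 : X.gen 0 + X.gen 6 = 0)
    (h2 : X.gen 1 + X.gen 2 + X.gen 3 = a • X.gen 0)
    (h5 : X.gen 0 + X.gen 1 + X.gen 2 = X.gen 4 + X.gen 5) :
    ¬ X.HasTND := by
  rintro ⟨Div, _, A, ⟨T⟩⟩
  have hcone : X.IsCone {1, 2, 4, 5} :=
    X.isCone_of_forall_isPrimitiveCollection_not_subset fun P hP => by
      rcases (hPC P).1 hP with rfl | rfl | rfl | rfl | rfl <;> decide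
  obtain ⟨i, hi⟩ := T.exists_inter_ne_zero 0
  exact hi (T.G1_inter_eq_zero ha h1 h2 h5 hcone ((hPC {0, 6}).2 (Or.inl rfl)).1 i)

/-- **Example 3.6.** Let `a` be a positive integer and let `X` be the
nonsingular projective toric 4-fold corresponding to the fan `Σ` with
`G(Σ) = {x_1, …, x_7}` and primitive relations
`x_1 + x_7 = 0`, `x_2 + x_3 + x_4 = a x_1`, `x_4 + x_5 + x_6 = (a+1) x_1`,
`x_5 + x_6 + x_7 = x_2 + x_3` and `x_1 + x_2 + x_3 = x_5 + x_6`.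
Then `X` admits no totally nondegenerate finite morphism from an abelian
surface.  (For `a = 1`, `X` is the nonsingular toric Fano 4-fold of type `𝒢₁`.)
Rays are indexed from `0`, so `x_k` is `X.gen (k-1)`. -/
theorem no_tnd_morphism_G1_family (a : ℤ) (ha : 0 < a) (X : ProjToricFourfold 7)
    (hPC : ∀ P : Finset (Fin 7), X.toToricFourfold.IsPrimitiveCollection P ↔
      (P = {0, 6} ∨ P = {1, 2, 3} ∨ P = {3, 4, 5} ∨ P = {4, 5, 6} ∨ P = {0, 1, 2}))
    (h1 : X.gen 0 + X.gen 6 = 0)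
    (h2 : X.gen 1 + X.gen 2 + X.gen 3 = a • X.gen 0)
    (h3 : X.gen 3 + X.gen 4 + X.gen 5 = (a + 1) • X.gen 0)
    (h4 : X.gen 4 + X.gen 5 + X.gen 6 = X.gen 1 + X.gen 2)
    (h5 : X.gen 0 + X.gen 1 + X.gen 2 = X.gen 4 + X.gen 5) :
    ¬ X.HasTND :=
  no_tnd_morphism_G1_family_general a ha X hPC h1 h2 h5
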